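/- Let V be a finite-dimensional complex vector space, W ⊆ GL(V) a finite subgroup generated by pseudo-reflections, and φ ∈ GL(V) of finite order normalizing W; let δ be the smallest positive integer with φ^δ ∈ W. Let n, d be positive integers, k = gcd(n, d), σ ∈ GL(V^n) given by σ(x₁, …, xₙ) = (x₂, …, xₙ, φ(x₁)), and ζ_d = exp(2πi/d). Then: (1) there exists a positive integer m with m·(n/k) ≡ 1 (mod d/k) and gcd(m, δ) = 1; (2) for any such m, the ζ_d-rank of the coset W^n·σ (the maximum over g ∈ W^n·σ of dim ker(g − ζ_d·id)) equals the ζ_{d/k}-rank of the coset W·φ^m (the maximum over w ∈ W of dim ker(w∘φ^m − ζ_{d/k}·id)). -/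

import Mathlib

/-- A pseudo-reflection: an automorphism `≠ 1` whose fixed subspace is a hyperplane. -/
def IsPseudoReflection {K V : Type*} [Field K] [AddCommGroup V] [Module K V]
    (g : V ≃ₗ[K] V) : Prop :=
  g ≠ 1 ∧
    Module.finrank K (LinearMap.ker ((g : V →ₗ[K] V) - LinearMap.id)) + 1 =
      Module.finrank K V

/-- The `ζ`-rank of a set of automorphisms: the maximal dimension of a `ζ`-eigenspace of
an element of the set. -/
noncomputable def eigenRank {K V : Type*} [Field K] [AddCommGroup V] [Module K V]
    (S : Set (V ≃ₗ[K] V)) (ζ : K) : ℕ :=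
  sSup {k : ℕ | ∃ g ∈ S, k = Module.finrank K (Module.End.eigenspace (g : V →ₗ[K] V) ζ)}

/-- The twisted-shift automorphism `σ` of `Vⁿ`:
`σ (x₁, …, xₙ) = (x₂, …, xₙ, φ x₁)`. -/
noncomputable def twistShift {K V : Type*} [Field K] [AddCommGroup V] [Module K V]
    (n : ℕ) (φ : V ≃ₗ[K] V) : (Fin n → V) ≃ₗ[K] (Fin n → V) :=
  (LinearEquiv.piCongrRight
      (fun i : Fin n => if (i : ℕ) = 0 then φ else LinearEquiv.refl K V)).trans
    (LinearEquiv.funCongrLeft K V (finRotate n))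

/-!
An eigenvector of `(w₀, …, w_N) · σ` for `ζ` is determined by its first coordinate `v`: the others
are forced to be `ζ^i (w₀ ⋯ w_{i-1})⁻¹ v`, and `v` must be a `ζ^(N+1)`-eigenvector of `w₀ ⋯ w_N φ`.
So the `ζ_d`-rank of `Wⁿσ` is the `ζ_dⁿ`-rank of `Wφ`, and `ζ_dⁿ = ζ_{d/k}^{n/k}`. Raising to the
power `m` maps `Wφ` into `Wφᵐ` and `ζ_{d/k}^{n/k}`-eigenspaces into `ζ_{d/k}`-eigenspaces; raising
to the power `b`, an inverse of `m` modulo `δ · d/k`, goes back. Eigenspaces only grow under powers,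
so the two ranks agree.
-/

open Module Module.End

theorem eigenspace_eq_map_of_intertwining {R M N : Type*} [CommRing R] [AddCommGroup M]
    [Module R M] [AddCommGroup N] [Module R N] (e : M ≃ₗ[R] N) {f : End R M} {g : End R N}
    (h : ∀ x, e (f x) = g (e x)) (μ : R) :
    eigenspace g μ = (eigenspace f μ).map (e : M →ₗ[R] N) := by
  ext y
  rw [Submodule.mem_map_equiv, mem_eigenspace_iff, mem_eigenspace_iff, ← e.injective.eq_iff,
    h, map_smul, e.apply_symm_apply]

theorem Fin.partialProd_last {G : Type*} [Monoid G] {n : ℕ} (w : Fin n → G) :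
    Fin.partialProd w (Fin.last n) = (List.ofFn w).prod := by
  rw [Fin.partialProd, Fin.val_last, List.take_of_length_le (List.length_ofFn (f := w)).le]

section TwistShift

variable {K V : Type*} [Field K] [AddCommGroup V] [Module K V]

@[simp]
theorem twistShift_apply_castSucc {N : ℕ} (φ : V ≃ₗ[K] V) (x : Fin (N + 1) → V) (i : Fin N) :
    twistShift (N + 1) φ x i.castSucc = x i.succ := by
  simp [twistShift, LinearEquiv.funCongrLeft_apply, LinearMap.funLeft]

@[simp]
theorem twistShift_apply_last {N : ℕ} (φ : V ≃ₗ[K] V) (x : Fin (N + 1) → V) :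
    twistShift (N + 1) φ x (Fin.last N) = φ (x 0) := by
  simp [twistShift, LinearEquiv.funCongrLeft_apply, LinearMap.funLeft]

theorem mem_eigenspace_twistShift_iff {N : ℕ} {ψ : V ≃ₗ[K] V} {ζ : K} {x : Fin (N + 1) → V} :
    x ∈ eigenspace (twistShift (N + 1) ψ : End K (Fin (N + 1) → V)) ζ ↔
      (∀ i : Fin N, x i.succ = ζ • x i.castSucc) ∧ ψ (x 0) = ζ • x (Fin.last N) := by
  rw [mem_eigenspace_iff, funext_iff, Fin.forall_fin_succ']
  simp

theorem eigenspace_twistShift_eq_map {N : ℕ} (ψ : V ≃ₗ[K] V) (ζ : K) :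
    eigenspace (twistShift (N + 1) ψ : End K (Fin (N + 1) → V)) ζ =
      (eigenspace (ψ : End K V) (ζ ^ (N + 1))).map
        (LinearMap.pi fun i : Fin (N + 1) => ζ ^ (i : ℕ) • LinearMap.id) := by
  ext x
  rw [mem_eigenspace_twistShift_iff, Submodule.mem_map]
  constructor
  · rintro ⟨hsucc, hlast⟩
    have hx : ∀ i, x i = ζ ^ (i : ℕ) • x 0 := by
      refine Fin.induction (by simp) fun i ih => ?_
      rw [hsucc, ih, smul_smul, Fin.val_succ, pow_succ', Fin.val_castSucc]
    refine ⟨x 0, mem_eigenspace_iff.2 ?_, funext fun i => (hx i).symm⟩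
    rw [LinearEquiv.coe_coe, hlast, hx, smul_smul, Fin.val_last, pow_succ']
  · rintro ⟨v, hv, rfl⟩
    rw [mem_eigenspace_iff, LinearEquiv.coe_coe] at hv
    refine ⟨fun i => ?_, ?_⟩ <;> simp [hv, smul_smul, pow_succ']

theorem finrank_eigenspace_twistShift {N : ℕ} (ψ : V ≃ₗ[K] V) (ζ : K) :
    finrank K (eigenspace (twistShift (N + 1) ψ : End K (Fin (N + 1) → V)) ζ) =
      finrank K (eigenspace (ψ : End K V) (ζ ^ (N + 1))) := by
  rw [eigenspace_twistShift_eq_map]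
  refine (Submodule.equivMapOfInjective _ (fun v w h => ?_) _).finrank_eq.symm
  simpa using congrFun h 0

theorem partialProd_intertwines_twistShift {N : ℕ} (w : Fin (N + 1) → (V ≃ₗ[K] V)) (φ : V ≃ₗ[K] V)
    (x : Fin (N + 1) → V) :
    LinearEquiv.piCongrRight (fun i => Fin.partialProd w i.castSucc)
        ((LinearEquiv.piCongrRight w * twistShift (N + 1) φ) x) =
      twistShift (N + 1) ((List.ofFn w).prod * φ)
        (LinearEquiv.piCongrRight (fun i => Fin.partialProd w i.castSucc) x) := by
  refine funext (Fin.forall_fin_succ'.2 ⟨fun i => ?_, ?_⟩)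
  · simp [Fin.partialProd_succ]
  · rw [← Fin.partialProd_last, ← Fin.succ_last, Fin.partialProd_succ]
    simp

theorem finrank_eigenspace_piCongrRight_mul_twistShift {N : ℕ} (w : Fin (N + 1) → (V ≃ₗ[K] V))
    (φ : V ≃ₗ[K] V) (ζ : K) :
    finrank K (eigenspace
        ((LinearEquiv.piCongrRight w * twistShift (N + 1) φ : (Fin (N + 1) → V) ≃ₗ[K] _) :
          End K (Fin (N + 1) → V)) ζ) =
      finrank K (eigenspace (((List.ofFn w).prod * φ : V ≃ₗ[K] V) : End K V) (ζ ^ (N + 1))) := by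
  rw [← finrank_eigenspace_twistShift, eigenspace_eq_map_of_intertwining _
    (partialProd_intertwines_twistShift w φ), LinearEquiv.finrank_map_eq]

end TwistShift

theorem eigenRank_le_eigenRank {K V₁ V₂ : Type*} [Field K] [AddCommGroup V₁] [Module K V₁]
    [AddCommGroup V₂] [Module K V₂] [FiniteDimensional K V₂] {S : Set (V₁ ≃ₗ[K] V₁)}
    {T : Set (V₂ ≃ₗ[K] V₂)} {μ ν : K}
    (h : ∀ g ∈ S, ∃ g' ∈ T, finrank K (eigenspace (g : End K V₁) μ) ≤
      finrank K (eigenspace (g' : End K V₂) ν)) :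
    eigenRank S μ ≤ eigenRank T ν := by
  have hbdd : BddAbove {k | ∃ g' ∈ T, k = finrank K (eigenspace (g' : End K V₂) ν)} :=
    ⟨finrank K V₂, by rintro _ ⟨g', -, rfl⟩; exact Submodule.finrank_le _⟩
  refine csSup_le' ?_
  rintro _ ⟨g, hg, rfl⟩
  obtain ⟨g', hg', hle⟩ := h g hg
  exact hle.trans (le_csSup hbdd ⟨g', hg', rfl⟩)

theorem eigenRank_piCongrRight_mul_twistShift {K V : Type*} [Field K] [AddCommGroup V]
    [Module K V] [FiniteDimensional K V] (W : Subgroup (V ≃ₗ[K] V)) (φ : V ≃ₗ[K] V) (N : ℕ)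
    (ζ : K) :
    eigenRank {g : (Fin (N + 1) → V) ≃ₗ[K] (Fin (N + 1) → V) |
        ∃ w : Fin (N + 1) → (V ≃ₗ[K] V), (∀ i, w i ∈ W) ∧
          g = LinearEquiv.piCongrRight w * twistShift (N + 1) φ} ζ =
      eigenRank {h | ∃ u ∈ W, h = u * φ} (ζ ^ (N + 1)) := by
  apply le_antisymm <;> refine eigenRank_le_eigenRank ?_
  · rintro _ ⟨w, hw, rfl⟩
    refine ⟨_, ⟨_, W.list_prod_mem fun x hx => ?_, rfl⟩,
      (finrank_eigenspace_piCongrRight_mul_twistShift w φ ζ).le⟩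
    obtain ⟨i, rfl⟩ := List.mem_ofFn.1 hx
    exact hw i
  · rintro _ ⟨u, hu, rfl⟩
    let w : Fin (N + 1) → (V ≃ₗ[K] V) := Fin.cons u fun _ => 1
    have hprod : (List.ofFn w).prod = u := by simp [w, List.ofFn_succ]
    refine ⟨_, ⟨w, Fin.cases hu fun _ => W.one_mem, rfl⟩, ?_⟩
    rw [finrank_eigenspace_piCongrRight_mul_twistShift, hprod]

theorem eigenspace_le_eigenspace_pow {R M : Type*} [CommRing R] [AddCommGroup M] [Module R M]
    (e : M ≃ₗ[R] M) (μ : R) (b : ℕ) :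
    eigenspace (e : End R M) μ ≤ eigenspace ((e ^ b : M ≃ₗ[R] M) : End R M) (μ ^ b) := by
  intro x hx
  rw [mem_eigenspace_iff, LinearEquiv.coe_coe] at hx ⊢
  induction b with
  | zero => simp
  | succ b ih => rw [pow_succ', LinearEquiv.mul_apply, ih, map_smul, hx, smul_smul, pow_succ]

section Coset

variable {G : Type*} [Group G] {W : Subgroup G} {φ : G}

theorem conj_pow_mem (hφ : ∀ u ∈ W, φ * u * φ⁻¹ ∈ W) (j : ℕ) {u : G} (hu : u ∈ W) :
    φ ^ j * u * (φ ^ j)⁻¹ ∈ W := by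
  induction j with
  | zero => simpa using hu
  | succ j ih => simpa [pow_succ', mul_assoc] using hφ _ ih

theorem exists_mem_mul_pow_pow_eq (hφ : ∀ u ∈ W, φ * u * φ⁻¹ ∈ W) (a b : ℕ) {u : G}
    (hu : u ∈ W) : ∃ u' ∈ W, (u * φ ^ a) ^ b = u' * φ ^ (a * b) := by
  induction b with
  | zero => exact ⟨1, W.one_mem, by simp⟩
  | succ b ih =>
    obtain ⟨u', hu', heq⟩ := ih
    refine ⟨u' * (φ ^ (a * b) * u * (φ ^ (a * b))⁻¹), W.mul_mem hu' (conj_pow_mem hφ _ hu), ?_⟩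
    rw [pow_succ, heq, mul_add, mul_one, pow_add]
    group

theorem exists_mem_mul_pow_eq_of_modEq {δ a b : ℕ} (hδ : φ ^ δ ∈ W) (h : a ≡ b [MOD δ]) {u : G}
    (hu : u ∈ W) : ∃ u' ∈ W, u * φ ^ a = u' * φ ^ b := by
  have hsplit : ∀ c, φ ^ c = (φ ^ δ) ^ (c / δ) * φ ^ (c % δ) := fun c => by
    rw [← pow_mul, ← pow_add, Nat.div_add_mod]
  refine ⟨u * (φ ^ δ) ^ (a / δ) * ((φ ^ δ) ^ (b / δ))⁻¹,
    W.mul_mem (W.mul_mem hu (W.pow_mem hδ _)) (W.inv_mem (W.pow_mem hδ _)), ?_⟩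
  rw [hsplit a, hsplit b, show a % δ = b % δ from h]
  group

end Coset

section CosetRank

variable {K V : Type*} [Field K] [AddCommGroup V] [Module K V] [FiniteDimensional K V]
  {W : Subgroup (V ≃ₗ[K] V)} {φ : V ≃ₗ[K] V}

theorem eigenRank_coset_le_pow (hφ : ∀ u ∈ W, φ * u * φ⁻¹ ∈ W) {δ : ℕ} (hδ : φ ^ δ ∈ W)
    {a b c : ℕ} (h : a * b ≡ c [MOD δ]) (μ : K) :
    eigenRank {x | ∃ u ∈ W, x = u * φ ^ a} μ ≤ eigenRank {x | ∃ u ∈ W, x = u * φ ^ c} (μ ^ b) := by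
  refine eigenRank_le_eigenRank ?_
  rintro _ ⟨u, hu, rfl⟩
  obtain ⟨u', hu', hpow⟩ := exists_mem_mul_pow_pow_eq hφ a b hu
  obtain ⟨u'', hu'', hmod⟩ := exists_mem_mul_pow_eq_of_modEq hδ h hu'
  refine ⟨_, ⟨u'', hu'', rfl⟩, Submodule.finrank_mono ?_⟩
  rw [← hmod, ← hpow]
  exact eigenspace_le_eigenspace_pow _ μ b

theorem eigenRank_coset_eq_coset_pow (hφ : ∀ u ∈ W, φ * u * φ⁻¹ ∈ W) {δ : ℕ}
    (hδ : φ ^ δ ∈ W) {m b : ℕ} (hmb : m * b ≡ 1 [MOD δ]) {μ : K} (hμ : μ ^ (m * b) = μ) :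
    eigenRank {x | ∃ u ∈ W, x = u * φ} μ = eigenRank {x | ∃ u ∈ W, x = u * φ ^ m} (μ ^ m) := by
  have hle := eigenRank_coset_le_pow hφ hδ (a := 1) (b := m) (by rw [one_mul]) μ
  have hge := eigenRank_coset_le_pow hφ hδ hmb (μ ^ m)
  rw [← pow_mul, hμ] at hge
  simp only [pow_one] at hle hge
  exact le_antisymm hle hge

end CosetRank

theorem Nat.exists_mul_modEq_one {a n : ℕ} (h : a.Coprime n) (hn : 0 < n) :
    ∃ b, a * b ≡ 1 [MOD n] :=
  ⟨a ^ (Nat.totient n - 1), by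
    rw [← _root_.pow_succ', Nat.sub_one_add_one (Nat.totient_pos.2 hn).ne']
    exact Nat.ModEq.pow_totient h⟩

theorem Nat.exists_pos_modEq_coprime {a c δ : ℕ} (ha : a.Coprime c) (hc : 0 < c) (hδ : 0 < δ) :
    ∃ m, 0 < m ∧ m ≡ a [MOD c] ∧ m.Coprime δ := by
  have : NeZero (c * δ) := ⟨(Nat.mul_pos hc hδ).ne'⟩
  have : NeZero c := ⟨hc.ne'⟩
  obtain ⟨v, hv⟩ := ZMod.unitsMap_surjective (dvd_mul_right c δ) (ZMod.unitOfCoprime a ha)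
  refine ⟨(v : ZMod (c * δ)).val + c * δ, by positivity, ?_, ?_⟩
  · rw [← ZMod.natCast_eq_natCast_iff]
    have := congrArg (fun x : (ZMod c)ˣ => (x : ZMod c)) hv
    simp only [ZMod.unitsMap_val, ZMod.coe_unitOfCoprime] at this
    push_cast
    simp [ZMod.natCast_val, this]
  · exact (Nat.coprime_add_self_left.2 (ZMod.val_coe_unit_coprime v)).coprime_dvd_right
      (dvd_mul_left δ c)

theorem Complex.exp_two_pi_mul_I_div_mul_pow_mul (a c : ℕ) {k : ℕ} (hk : k ≠ 0) :
    exp (2 * Real.pi * I / (c * k : ℕ)) ^ (a * k) = exp (2 * Real.pi * I / c) ^ a := by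
  rw [← Complex.exp_nat_mul, ← Complex.exp_nat_mul]
  congr 1
  have : (k : ℂ) ≠ 0 := Nat.cast_ne_zero.2 hk
  push_cast
  rw [mul_div_assoc', mul_div_assoc', mul_comm (a : ℂ) k, mul_assoc, mul_comm (c : ℂ) k,
    mul_div_mul_left _ _ this]

open Complex in
theorem restriction_of_scalars_rank_zeta_d_general
    {V : Type*} [AddCommGroup V] [Module ℂ V] [FiniteDimensional ℂ V]
    (W : Subgroup (V ≃ₗ[ℂ] V))
    (φ : V ≃ₗ[ℂ] V)
    (hφnorm : ∀ u ∈ W, φ * u * φ⁻¹ ∈ W)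
    (δ : ℕ) (hδ : IsLeast {i : ℕ | 0 < i ∧ φ ^ i ∈ W} δ)
    (n d : ℕ) (hn : 0 < n) (hd : 0 < d) :
    (∃ m : ℕ, 0 < m ∧ m * (n / Nat.gcd n d) ≡ 1 [MOD d / Nat.gcd n d] ∧
      Nat.Coprime m δ) ∧
    ∀ m : ℕ, 0 < m → m * (n / Nat.gcd n d) ≡ 1 [MOD d / Nat.gcd n d] →
      Nat.Coprime m δ →
      eigenRank {g : (Fin n → V) ≃ₗ[ℂ] (Fin n → V) |
          ∃ w : Fin n → (V ≃ₗ[ℂ] V), (∀ i, w i ∈ W) ∧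
            g = LinearEquiv.piCongrRight w * twistShift n φ}
        (Complex.exp (2 * Real.pi * Complex.I / d)) =
      eigenRank {h : V ≃ₗ[ℂ] V | ∃ u ∈ W, h = u * φ ^ m}
        (Complex.exp (2 * Real.pi * Complex.I / (d / Nat.gcd n d : ℕ))) := by
  obtain ⟨⟨hδ, hφδ⟩, -⟩ := hδ
  obtain ⟨N, rfl⟩ : ∃ N, n = N + 1 := ⟨n - 1, by omega⟩
  set k := Nat.gcd (N + 1) d
  set n' := (N + 1) / k
  set d' := d / k
  have hk : 0 < k := Nat.gcd_pos_of_pos_left d hn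
  have hd' : 0 < d' := Nat.div_pos (Nat.gcd_le_right _ hd) hk
  have hcop : n'.Coprime d' := Nat.coprime_div_gcd_div_gcd hk
  refine ⟨?_, fun m _ hmn hmδ => ?_⟩
  · obtain ⟨m₀, hm₀⟩ := Nat.exists_mul_modEq_one hcop hd'
    rw [mul_comm] at hm₀
    obtain ⟨m, hm, hmm₀, hmδ⟩ :=
      Nat.exists_pos_modEq_coprime (Nat.coprime_of_mul_modEq_one _ hm₀) hd' hδ
    exact ⟨m, hm, (hmm₀.mul_right _).trans hm₀, hmδ⟩
  · set ζ := Complex.exp (2 * Real.pi * Complex.I / d')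
    have hζ : Complex.exp (2 * Real.pi * Complex.I / d) ^ (N + 1) = ζ ^ n' := by
      have h := Complex.exp_two_pi_mul_I_div_mul_pow_mul n' d' hk.ne'
      rwa [Nat.div_mul_cancel (Nat.gcd_dvd_left _ _), Nat.div_mul_cancel (Nat.gcd_dvd_right _ _)]
        at h
    have hζd : ζ ^ d' = 1 := (Complex.isPrimitiveRoot_exp d' hd'.ne').pow_eq_one
    obtain ⟨b, hb⟩ := Nat.exists_mul_modEq_one
      (hmδ.mul_right (Nat.coprime_of_mul_modEq_one _ hmn)) (Nat.mul_pos hδ hd')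
    have hζpow : (ζ ^ n') ^ (m * b) = ζ ^ n' := by
      rw [← pow_mul]
      exact pow_eq_pow_of_modEq (by simpa using (hb.of_mul_left δ).mul_left n') hζd
    rw [eigenRank_piCongrRight_mul_twistShift, hζ,
      eigenRank_coset_eq_coset_pow hφnorm hφδ (hb.of_mul_right _) hζpow, ← pow_mul, mul_comm,
      pow_eq_pow_of_modEq hmn hζd, pow_one]

open Complex in
/-- Restriction of scalars for complex reflection cosets, distinguished roots of unity:
with `k = gcd(n, d)`, there exists `m` with `m·(n/k) ≡ 1 (mod d/k)` and `gcd(m, δ) = 1`,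
and for any such `m` the `ζ_d`-rank of `Wⁿ·σ` equals the `ζ_{d/k}`-rank of `W·φᵐ`. -/
theorem restriction_of_scalars_rank_zeta_d
    {V : Type*} [AddCommGroup V] [Module ℂ V] [FiniteDimensional ℂ V]
    (W : Subgroup (V ≃ₗ[ℂ] V)) (hWfin : (W : Set (V ≃ₗ[ℂ] V)).Finite)
    (hWrefl : Subgroup.closure {g : V ≃ₗ[ℂ] V | g ∈ W ∧ IsPseudoReflection g} = W)
    (φ : V ≃ₗ[ℂ] V) (hφord : IsOfFinOrder φ)
    (hφnorm : ∀ u ∈ W, φ * u * φ⁻¹ ∈ W)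
    (δ : ℕ) (hδ : IsLeast {i : ℕ | 0 < i ∧ φ ^ i ∈ W} δ)
    (n d : ℕ) (hn : 0 < n) (hd : 0 < d) :
    (∃ m : ℕ, 0 < m ∧ m * (n / Nat.gcd n d) ≡ 1 [MOD d / Nat.gcd n d] ∧
      Nat.Coprime m δ) ∧
    ∀ m : ℕ, 0 < m → m * (n / Nat.gcd n d) ≡ 1 [MOD d / Nat.gcd n d] →
      Nat.Coprime m δ →
      eigenRank {g : (Fin n → V) ≃ₗ[ℂ] (Fin n → V) |
          ∃ w : Fin n → (V ≃ₗ[ℂ] V), (∀ i, w i ∈ W) ∧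
            g = LinearEquiv.piCongrRight w * twistShift n φ}
        (Complex.exp (2 * Real.pi * Complex.I / d)) =
      eigenRank {h : V ≃ₗ[ℂ] V | ∃ u ∈ W, h = u * φ ^ m}
        (Complex.exp (2 * Real.pi * Complex.I / (d / Nat.gcd n d : ℕ))) :=
  restriction_of_scalars_rank_zeta_d_general W φ hφnorm δ hδ n d hn hd
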